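/- arXiv:2311.02380 — 3 statements merged into one kernel-verified Lean document; each statement's English description precedes it below -/
import Mathlib

section
/- Let ĥ₁, ĥ₂ : (0,∞) → (0,∞) be continuous and strictly increasing with ĥᵢ(w) → 0 as w → 0⁺ and ĥᵢ(w) → ∞ as w → ∞, and let n > 0 be constant. Then for every (h₁,h₂) ∈ ℝ² \ {0} there exists a unique w* > 0 such that |h₁/ĥ₁(w*)|ⁿ + |h₂/ĥ₂(w*)|ⁿ = 1. -/
open Set Filter

/-!
Write `F w = |h₁/ĥ₁(w)|ⁿ + |h₂/ĥ₂(w)|ⁿ`. Each summand is antitone in `w`, and strictly so when its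
numerator is nonzero, so `F` is strictly decreasing on `(0, ∞)` and takes the value `1` at most
once. A summand with nonzero numerator blows up as `w → 0⁺`, and both summands vanish as
`w → ∞`; by continuity and the intermediate value theorem `F` takes the value `1`.
-/

theorem existsUnique_mem_and_eq_of_injOn {X α : Type*} [TopologicalSpace X] [LinearOrder α]
    [TopologicalSpace α] [OrderClosedTopology α] {F : X → α} {s : Set X} {a b : X} {y : α}
    (hs : IsPreconnected s) (hF : ContinuousOn F s) (hinj : InjOn F s)
    (ha : a ∈ s) (hb : b ∈ s) (hya : y ≤ F a) (hyb : F b ≤ y) :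
    ∃! w, w ∈ s ∧ F w = y := by
  obtain ⟨w, hw, hFw⟩ := hs.intermediate_value hb ha hF ⟨hyb, hya⟩
  exact ⟨w, ⟨hw, hFw⟩, fun v ⟨hv, hFv⟩ => hinj hv hw (hFv.trans hFw.symm)⟩

section AbsDivRpow

variable {g : ℝ → ℝ} {a b c n : ℝ} {s : Set ℝ}

theorem abs_div_rpow_le_of_le (hn : 0 ≤ n) (ha : 0 < a) (hab : a ≤ b) :
    |c / b| ^ n ≤ |c / a| ^ n := by
  refine Real.rpow_le_rpow (abs_nonneg _) ?_ hn
  rw [abs_div, abs_div, abs_of_pos ha, abs_of_pos (ha.trans_le hab)]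
  exact div_le_div_of_nonneg_left (abs_nonneg c) ha hab

theorem abs_div_rpow_lt_of_lt (hc : c ≠ 0) (hn : 0 < n) (ha : 0 < a) (hab : a < b) :
    |c / b| ^ n < |c / a| ^ n := by
  refine Real.rpow_lt_rpow (abs_nonneg _) ?_ hn
  rw [abs_div, abs_div, abs_of_pos ha, abs_of_pos (ha.trans hab)]
  exact div_lt_div_of_pos_left (abs_pos.2 hc) ha hab

theorem antitoneOn_abs_div_rpow (hn : 0 ≤ n) (hpos : ∀ w ∈ s, 0 < g w) (hg : MonotoneOn g s) :
    AntitoneOn (fun w => |c / g w| ^ n) s :=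
  fun _ hv _ hw hvw => abs_div_rpow_le_of_le hn (hpos _ hv) (hg hv hw hvw)

theorem strictAntiOn_abs_div_rpow (hc : c ≠ 0) (hn : 0 < n) (hpos : ∀ w ∈ s, 0 < g w)
    (hg : StrictMonoOn g s) : StrictAntiOn (fun w => |c / g w| ^ n) s :=
  fun _ hv _ hw hvw => abs_div_rpow_lt_of_lt hc hn (hpos _ hv) (hg hv hw hvw)

theorem continuousOn_abs_div_rpow (hn : 0 ≤ n) (hg : ContinuousOn g s) (h0 : ∀ w ∈ s, g w ≠ 0) :
    ContinuousOn (fun w => |c / g w| ^ n) s :=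
  ((continuousOn_const.div hg h0).abs).rpow_const fun _ _ => Or.inr hn

theorem tendsto_abs_div_rpow_nhds_zero {l : Filter ℝ} (hn : 0 < n) (hg : Tendsto g l atTop) :
    Tendsto (fun w => |c / g w| ^ n) l (nhds 0) := by
  have habs : Tendsto (fun w => |c / g w|) l (nhds 0) := by
    simpa using (tendsto_const_nhds.div_atTop hg).abs
  simpa [Real.zero_rpow hn.ne', Function.comp_def] using
    ((Real.continuousAt_rpow_const 0 n (Or.inr hn.le)).tendsto.comp habs)

theorem tendsto_abs_div_rpow_atTop {l : Filter ℝ} (hc : c ≠ 0) (hn : 0 < n)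
    (hg : Tendsto g l (nhdsWithin 0 (Ioi 0))) :
    Tendsto (fun w => |c / g w| ^ n) l atTop := by
  have hinv : Tendsto (fun w => |c| * (g w)⁻¹) l atTop :=
    (tendsto_inv_nhdsGT_zero.comp hg).const_mul_atTop (abs_pos.2 hc)
  refine (tendsto_rpow_atTop hn).comp (hinv.congr' ?_)
  filter_upwards [(tendsto_nhdsWithin_iff.1 hg).2] with w (hw : 0 < g w)
  rw [abs_div, abs_of_pos hw, div_eq_mul_inv]

end AbsDivRpow

theorem existsUnique_pos_abs_div_rpow_add_eq_one {g₁ g₂ : ℝ → ℝ} {c₁ c₂ n : ℝ}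
    (hc₁ : c₁ ≠ 0) (hn : 0 < n)
    (hpos₁ : ∀ w ∈ Ioi (0 : ℝ), 0 < g₁ w) (hpos₂ : ∀ w ∈ Ioi (0 : ℝ), 0 < g₂ w)
    (hcont₁ : ContinuousOn g₁ (Ioi 0)) (hcont₂ : ContinuousOn g₂ (Ioi 0))
    (hmono₁ : StrictMonoOn g₁ (Ioi 0)) (hmono₂ : MonotoneOn g₂ (Ioi 0))
    (hzero₁ : Tendsto g₁ (nhdsWithin 0 (Ioi 0)) (nhds 0))
    (htop₁ : Tendsto g₁ atTop atTop) (htop₂ : Tendsto g₂ atTop atTop) :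
    ∃! w : ℝ, 0 < w ∧ |c₁ / g₁ w| ^ n + |c₂ / g₂ w| ^ n = 1 := by
  set F : ℝ → ℝ := fun w => |c₁ / g₁ w| ^ n + |c₂ / g₂ w| ^ n
  have hanti : StrictAntiOn F (Ioi 0) :=
    (strictAntiOn_abs_div_rpow hc₁ hn hpos₁ hmono₁).add_antitone
      (antitoneOn_abs_div_rpow hn.le hpos₂ hmono₂)
  have hcont : ContinuousOn F (Ioi 0) :=
    (continuousOn_abs_div_rpow hn.le hcont₁ fun w hw => (hpos₁ w hw).ne').add
      (continuousOn_abs_div_rpow hn.le hcont₂ fun w hw => (hpos₂ w hw).ne')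
  have hg₁ : Tendsto g₁ (nhdsWithin 0 (Ioi 0)) (nhdsWithin 0 (Ioi 0)) :=
    tendsto_nhdsWithin_iff.2 ⟨hzero₁, eventually_nhdsWithin_of_forall hpos₁⟩
  have hF_zero : Tendsto F (nhdsWithin 0 (Ioi 0)) atTop :=
    tendsto_atTop_add_right_of_le _ 0 (tendsto_abs_div_rpow_atTop hc₁ hn hg₁)
      fun _ => Real.rpow_nonneg (abs_nonneg _) n
  have hF_top : Tendsto F atTop (nhds 0) := by
    simpa using (tendsto_abs_div_rpow_nhds_zero (c := c₁) hn htop₁).add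
      (tendsto_abs_div_rpow_nhds_zero (c := c₂) hn htop₂)
  obtain ⟨a, ha, (ha' : 0 < a)⟩ :=
    ((hF_zero.eventually_ge_atTop 1).and self_mem_nhdsWithin).exists
  obtain ⟨b, hb, hb'⟩ :=
    ((hF_top.eventually (ge_mem_nhds one_pos)).and (eventually_gt_atTop 0)).exists
  exact existsUnique_mem_and_eq_of_injOn isPreconnected_Ioi hcont hanti.injOn ha' hb' ha hb

theorem stmt2 (h1 h2 : ℝ → ℝ) (n : ℝ) (hn : 0 < n)
    (hpos : ∀ w ∈ Set.Ioi (0:ℝ), h1 w ∈ Set.Ioi (0:ℝ) ∧ h2 w ∈ Set.Ioi (0:ℝ))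
    (hc1 : ContinuousOn h1 (Set.Ioi 0)) (hc2 : ContinuousOn h2 (Set.Ioi 0))
    (hm1 : StrictMonoOn h1 (Set.Ioi 0)) (hm2 : StrictMonoOn h2 (Set.Ioi 0))
    (h10 : Tendsto h1 (nhdsWithin 0 (Set.Ioi 0)) (nhds 0))
    (h20 : Tendsto h2 (nhdsWithin 0 (Set.Ioi 0)) (nhds 0))
    (h1top : Tendsto h1 atTop atTop) (h2top : Tendsto h2 atTop atTop)
    (x : ℝ × ℝ) (hx : x ≠ 0) :
    ∃! w : ℝ, 0 < w ∧ |x.1 / h1 w| ^ n + |x.2 / h2 w| ^ n = 1 := by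
  have hpos1 : ∀ w ∈ Ioi (0 : ℝ), 0 < h1 w := fun w hw => (hpos w hw).1
  have hpos2 : ∀ w ∈ Ioi (0 : ℝ), 0 < h2 w := fun w hw => (hpos w hw).2
  by_cases hx1 : x.1 ≠ 0
  · exact existsUnique_pos_abs_div_rpow_add_eq_one hx1 hn hpos1 hpos2 hc1 hc2 hm1
      hm2.monotoneOn h10 h1top h2top
  · have hx2 : x.2 ≠ 0 := fun hx2 => hx (Prod.ext (not_not.1 hx1) hx2)
    simpa only [add_comm] using existsUnique_pos_abs_div_rpow_add_eq_one hx2 hn hpos2 hpos1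
      hc2 hc1 hm2 hm1.monotoneOn h20 h2top h1top
end

section
/- Under the hypotheses guaranteeing unique solvability (ĥ₁, ĥ₂ : (0,∞) → (0,∞) continuous, strictly increasing, tending to 0 at 0 and to ∞ at ∞, n > 0 constant), the implicitly defined function w* : ℝ² \ {0} → (0,∞) satisfies w*(h₁,h₂) → 0 as (h₁,h₂) → (0,0), and w*(h₁,h₂) → ∞ as |(h₁,h₂)| → ∞; hence w* extends continuously to ℝ² by setting w*(0,0) = 0 and this extension is coercive. -/
open Set Filter

theorem stmt3 (h1 h2 : ℝ → ℝ) (n : ℝ) (hn : 0 < n)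
    (hpos : ∀ v ∈ Set.Ioi (0:ℝ), h1 v ∈ Set.Ioi (0:ℝ) ∧ h2 v ∈ Set.Ioi (0:ℝ))
    (hc1 : ContinuousOn h1 (Set.Ioi 0)) (hc2 : ContinuousOn h2 (Set.Ioi 0))
    (hm1 : StrictMonoOn h1 (Set.Ioi 0)) (hm2 : StrictMonoOn h2 (Set.Ioi 0))
    (h10 : Tendsto h1 (nhdsWithin 0 (Set.Ioi 0)) (nhds 0))
    (h20 : Tendsto h2 (nhdsWithin 0 (Set.Ioi 0)) (nhds 0))
    (h1top : Tendsto h1 atTop atTop) (h2top : Tendsto h2 atTop atTop)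
    (w : ℝ × ℝ → ℝ)
    (hw : ∀ x : ℝ × ℝ, x ≠ 0 → 0 < w x ∧ |x.1 / h1 (w x)| ^ n + |x.2 / h2 (w x)| ^ n = 1) :
    Tendsto w (nhdsWithin 0 {x : ℝ × ℝ | x ≠ 0}) (nhds 0) ∧
    Tendsto w (Filter.comap norm Filter.atTop) Filter.atTop ∧
    ContinuousAt (fun x : ℝ × ℝ => if x = 0 then 0 else w x) 0 ∧
    Tendsto (fun x : ℝ × ℝ => if x = 0 then 0 else w x) (Filter.comap norm Filter.atTop)
      Filter.atTop := by
  set c : ℝ := ((1:ℝ)/2) ^ (1/n) with hc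
  have hcpos : 0 < c := Real.rpow_pos_of_pos (by norm_num) _
  -- positivity of h1, h2 at w x
  have hupp : ∀ x : ℝ × ℝ, x ≠ 0 → |x.1| ≤ h1 (w x) ∧ |x.2| ≤ h2 (w x) := by
    intro x hx
    obtain ⟨hwp, heq⟩ := hw x hx
    obtain ⟨hp1, hp2⟩ := hpos _ hwp
    have key : ∀ (a b : ℝ), 0 < b → |a / b| ^ n ≤ 1 → |a| ≤ b := by
      intro a b hb hle
      by_contra hcon
      push_neg at hcon
      have h1lt : 1 < |a / b| := by
        rw [abs_div, abs_of_pos hb]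
        exact (one_lt_div hb).2 hcon
      have : (1:ℝ) < |a / b| ^ n := by
        calc (1:ℝ) = 1 ^ n := (Real.one_rpow n).symm
        _ < |a / b| ^ n := Real.rpow_lt_rpow (by norm_num) h1lt hn
      linarith
    constructor
    · exact key _ _ hp1 (by nlinarith [Real.rpow_nonneg (abs_nonneg (x.2 / h2 (w x))) n])
    · exact key _ _ hp2 (by nlinarith [Real.rpow_nonneg (abs_nonneg (x.1 / h1 (w x))) n])
  have hlow : ∀ x : ℝ × ℝ, x ≠ 0 → c * h1 (w x) ≤ |x.1| ∨ c * h2 (w x) ≤ |x.2| := by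
    intro x hx
    obtain ⟨hwp, heq⟩ := hw x hx
    obtain ⟨hp1, hp2⟩ := hpos _ hwp
    have key : ∀ (a b : ℝ), 0 < b → (1/2 : ℝ) ≤ |a / b| ^ n → c * b ≤ |a| := by
      intro a b hb hhalf
      have habs : c ≤ |a / b| := by
        calc c = ((1:ℝ)/2) ^ (1/n) := hc
        _ ≤ (|a / b| ^ n) ^ (1/n) :=
          Real.rpow_le_rpow (by norm_num) hhalf (by positivity)
        _ = |a / b| ^ (n * (1/n)) := (Real.rpow_mul (abs_nonneg _) n (1/n)).symm
        _ = |a / b| := by rw [mul_one_div_cancel hn.ne', Real.rpow_one]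
      rw [abs_div, abs_of_pos hb, le_div_iff₀ hb] at habs
      linarith
    rcases le_or_gt (1/2 : ℝ) (|x.1 / h1 (w x)| ^ n) with h | h
    · exact Or.inl (key _ _ hp1 h)
    · exact Or.inr (key _ _ hp2 (by linarith))
  -- Part 1: w → 0 near 0
  have Htend0 : Tendsto w (nhdsWithin 0 {x : ℝ × ℝ | x ≠ 0}) (nhds 0) := by
    rw [Metric.tendsto_nhdsWithin_nhds]
    intro ε hε
    obtain ⟨hpε1, hpε2⟩ := hpos ε hε
    simp only [Set.mem_Ioi] at hpε1 hpε2
    refine ⟨c * min (h1 ε) (h2 ε), by positivity, ?_⟩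
    intro x hx hdist
    obtain ⟨hwp, _⟩ := hw x hx
    rw [Real.dist_eq, sub_zero, abs_of_pos hwp]
    by_contra hcon
    push_neg at hcon
    have hwε : ε ≤ w x := hcon
    rw [dist_zero_right] at hdist
    have hm1' : h1 ε ≤ h1 (w x) := (hm1.monotoneOn) hε hwp hwε
    have hm2' : h2 ε ≤ h2 (w x) := (hm2.monotoneOn) hε hwp hwε
    rcases hlow x hx with hl | hl
    · have : c * min (h1 ε) (h2 ε) ≤ |x.1| := by
        calc c * min (h1 ε) (h2 ε) ≤ c * h1 (w x) := by
              have := min_le_left (h1 ε) (h2 ε); nlinarith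
        _ ≤ |x.1| := hl
      have := (norm_fst_le x).trans_lt hdist
      rw [Real.norm_eq_abs] at this
      linarith
    · have : c * min (h1 ε) (h2 ε) ≤ |x.2| := by
        calc c * min (h1 ε) (h2 ε) ≤ c * h2 (w x) := by
              have := min_le_right (h1 ε) (h2 ε); nlinarith
        _ ≤ |x.2| := hl
      have := (norm_snd_le x).trans_lt hdist
      rw [Real.norm_eq_abs] at this
      linarith
  -- Part 2: w → ∞ at ∞
  have Htendtop : Tendsto w (Filter.comap norm Filter.atTop) Filter.atTop := by
    rw [tendsto_atTop]
    intro M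
    set M' : ℝ := max M 1 with hM'
    have hM'pos : (0:ℝ) < M' := lt_of_lt_of_le one_pos (le_max_right _ _)
    obtain ⟨hpM1, hpM2⟩ := hpos M' hM'pos
    have hmem : {x : ℝ × ℝ | h1 M' + h2 M' + 1 ≤ ‖x‖} ∈ Filter.comap norm Filter.atTop :=
      Filter.preimage_mem_comap (mem_atTop (h1 M' + h2 M' + 1))
    filter_upwards [hmem] with x hxN
    have hNpos : (0:ℝ) < h1 M' + h2 M' + 1 := by
      have := hpM1; have := hpM2; simp only [Set.mem_Ioi] at *; linarith
    have hx : x ≠ 0 := by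
      intro h; rw [h, norm_zero] at hxN; linarith
    obtain ⟨hwp, _⟩ := hw x hx
    obtain ⟨hu1, hu2⟩ := hupp x hx
    by_contra hcon
    push_neg at hcon
    have hwM : w x ≤ M' := le_trans hcon.le (le_max_left _ _)
    have hb1 : h1 (w x) ≤ h1 M' := (hm1.monotoneOn) hwp hM'pos hwM
    have hb2 : h2 (w x) ≤ h2 M' := (hm2.monotoneOn) hwp hM'pos hwM
    have hnorm : ‖x‖ ≤ max |x.1| |x.2| := by
      rw [Prod.norm_def, Real.norm_eq_abs, Real.norm_eq_abs]
    have : ‖x‖ ≤ h1 M' + h2 M' := by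
      have h1' : |x.1| ≤ h1 M' := le_trans hu1 hb1
      have h2' : |x.2| ≤ h2 M' := le_trans hu2 hb2
      have := hpM1; have := hpM2; simp only [Set.mem_Ioi] at *
      calc ‖x‖ ≤ max |x.1| |x.2| := hnorm
      _ ≤ h1 M' + h2 M' := max_le (by linarith) (by linarith)
    linarith
  refine ⟨Htend0, Htendtop, ?_, ?_⟩
  · -- continuity at 0 of extension
    have hsup : nhdsWithin (0 : ℝ × ℝ) {(0:ℝ×ℝ)}ᶜ ⊔ pure 0 = nhds 0 :=
      nhdsNE_sup_pure 0
    rw [ContinuousAt]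
    simp only [if_pos rfl]
    rw [← hsup, tendsto_sup]
    constructor
    · have heqv : (fun x : ℝ × ℝ => if x = 0 then 0 else w x) =ᶠ[nhdsWithin 0 {(0:ℝ×ℝ)}ᶜ] w := by
        filter_upwards [self_mem_nhdsWithin] with x hx
        simp [Set.mem_compl_iff, Set.mem_singleton_iff] at hx
        simp [hx]
      have Htend0' : Tendsto w (nhdsWithin 0 {(0:ℝ×ℝ)}ᶜ) (nhds 0) := by
        have hset : {x : ℝ × ℝ | x ≠ 0} = {(0:ℝ×ℝ)}ᶜ := by ext y; simp
        rwa [hset] at Htend0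
      exact Tendsto.congr' heqv.symm Htend0'
    · have : (fun x : ℝ × ℝ => if x = 0 then 0 else w x) 0 = 0 := by simp
      rw [tendsto_pure_left]
      intro s hs
      simp only [if_pos rfl]
      exact mem_of_mem_nhds hs
  · -- coercivity of extension
    have heqv : (fun x : ℝ × ℝ => if x = 0 then 0 else w x) =ᶠ[Filter.comap norm Filter.atTop] w := by
      filter_upwards [Filter.preimage_mem_comap (mem_atTop (1:ℝ))] with x hx
      have hx0 : x ≠ 0 := by
        intro h; subst h; simp at hx; linarith
      simp [hx0]
    exact Htendtop.congr' heqv.symm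
end

section
/- There exist continuous strictly increasing surjective functions ĥ₁, ĥ₂ : (0,∞) → (0,∞) and a continuous function n : (0,∞) → (0,∞) with n(w) ≥ 1 for all w, and a point (h₁,h₂) ∈ ℝ² \ {0}, such that the equation |h₁/ĥ₁(w)|^{n(w)} + |h₂/ĥ₂(w)|^{n(w)} = 1 has more than one solution w > 0. -/
open Set Filter

theorem stmt19 :
    ∃ (h1 h2 : ℝ → ℝ) (n : ℝ → ℝ) (x : ℝ × ℝ),
      (∀ v ∈ Set.Ioi (0:ℝ), h1 v ∈ Set.Ioi (0:ℝ) ∧ h2 v ∈ Set.Ioi (0:ℝ)) ∧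
      ContinuousOn h1 (Set.Ioi 0) ∧ ContinuousOn h2 (Set.Ioi 0) ∧
      StrictMonoOn h1 (Set.Ioi 0) ∧ StrictMonoOn h2 (Set.Ioi 0) ∧
      Set.SurjOn h1 (Set.Ioi 0) (Set.Ioi 0) ∧ Set.SurjOn h2 (Set.Ioi 0) (Set.Ioi 0) ∧
      ContinuousOn n (Set.Ioi 0) ∧ (∀ v ∈ Set.Ioi (0:ℝ), 1 ≤ n v) ∧
      x ≠ 0 ∧
      ∃ w1 w2 : ℝ, 0 < w1 ∧ 0 < w2 ∧ w1 ≠ w2 ∧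
        |x.1 / h1 w1| ^ n w1 + |x.2 / h2 w1| ^ n w1 = 1 ∧
        |x.1 / h1 w2| ^ n w2 + |x.2 / h2 w2| ^ n w2 = 1 := by
  have hs2 : Real.sqrt 2 < 2 := by
    have : Real.sqrt 2 < Real.sqrt 4 := by
      apply Real.sqrt_lt_sqrt <;> norm_num
    have h4 : Real.sqrt 4 = 2 := by
      rw [show (4:ℝ) = 2^2 by norm_num, Real.sqrt_sq (by norm_num)]
    linarith
  have hs2pos : 0 < Real.sqrt 2 := Real.sqrt_pos.mpr (by norm_num)
  have hden : (0:ℝ) < 2 - Real.sqrt 2 := by linarith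
  refine ⟨id, id, fun w => 1 + |2 - w| / (2 - Real.sqrt 2), (1, 1), ?_, ?_, ?_, ?_, ?_, ?_, ?_, ?_, ?_, ?_, ?_⟩
  · intro v hv; exact ⟨hv, hv⟩
  · exact continuous_id.continuousOn
  · exact continuous_id.continuousOn
  · exact fun a _ b _ h => h
  · exact fun a _ b _ h => h
  · exact fun x hx => ⟨x, hx, rfl⟩
  · exact fun x hx => ⟨x, hx, rfl⟩
  · exact (continuous_const.add (((continuous_const.sub continuous_id).abs).div_const _)).continuousOn
  · intro v _
    have : 0 ≤ |2 - v| / (2 - Real.sqrt 2) := div_nonneg (abs_nonneg _) hden.le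
    linarith
  · simp [Prod.ext_iff]
  · refine ⟨2, Real.sqrt 2, by norm_num, hs2pos, by linarith, ?_, ?_⟩
    · have hn : 1 + |2 - (2:ℝ)| / (2 - Real.sqrt 2) = 1 := by simp
      simp only [id_eq]
      rw [hn]
      have : |(1:ℝ)/2| = 1/2 := by rw [abs_of_pos]; norm_num
      norm_num [this, Real.rpow_one]
    · have hn : 1 + |2 - Real.sqrt 2| / (2 - Real.sqrt 2) = 2 := by
        rw [abs_of_pos hden, div_self (ne_of_gt hden)]; norm_num
      simp only [id_eq]
      rw [hn]
      have hval : |(1:ℝ) / Real.sqrt 2| = 1 / Real.sqrt 2 := by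
        rw [abs_of_pos]; positivity
      have hpow : (1 / Real.sqrt 2 : ℝ) ^ (2:ℝ) = 1/2 := by
        rw [Real.rpow_two, div_pow, one_pow, Real.sq_sqrt (by norm_num : (0:ℝ) ≤ 2)]
      rw [hval, hpow]; norm_num
end
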